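/- arXiv:1410.5867 — 2 statements merged into one kernel-verified Lean document; each statement's English description precedes it below -/
import Mathlib

section
/- The unique positive real solution (r, s, p, q) with r > 8 of the system r² - 8r - 4s - 4p - 4q - 4 = 0, r·s - 4r - 2s - 2p - 2q - 2 = 0, r·p - 2r - s - p - q - 1 = 0, r·q - r - s - p - q - 1 = 0 is (r, s, p, q) = (12, 6, 3, 2). -/
/-! Subtracting the equations pairwise with weights `1, -2`, `1, -2`, `1, -1` leaves
`r (r - 2s) = 0`, `r (s - 2p) = 0` and `r (p - q - 1) = 0`, so `r = 2s`, `s = 2p`,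
`p = q + 1`; the last equation then reads `4 (q + 1) (q - 2) = 0`. -/

theorem stmt_4_general (r s p q : ℝ) (hr : 0 < r)
    (h1 : r ^ 2 - 8 * r - 4 * s - 4 * p - 4 * q - 4 = 0)
    (h2 : r * s - 4 * r - 2 * s - 2 * p - 2 * q - 2 = 0)
    (h3 : r * p - 2 * r - s - p - q - 1 = 0)
    (h4 : r * q - r - s - p - q - 1 = 0) :
    r = 12 ∧ s = 6 ∧ p = 3 ∧ q = 2 := by
  have hr0 : r ≠ 0 := hr.ne'
  have hrs : r = 2 * s := mul_left_cancel₀ hr0 (by linear_combination h1 - 2 * h2)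
  have hsp : s = 2 * p := mul_left_cancel₀ hr0 (by linear_combination h2 - 2 * h3)
  have hpq : p = q + 1 := mul_left_cancel₀ hr0 (by linear_combination h3 - h4)
  subst hrs hsp hpq
  have hq1 : q + 1 ≠ 0 := fun h ↦ hr0 (by linear_combination 4 * h)
  have hq : q = 2 := mul_left_cancel₀ hq1 (by linear_combination h4 / 4)
  subst hq
  norm_num

theorem stmt_4 (r s p q : ℝ) (hr : 0 < r) (hs : 0 < s) (hp : 0 < p) (hq : 0 < q)
    (hr8 : r > 8)
    (h1 : r ^ 2 - 8 * r - 4 * s - 4 * p - 4 * q - 4 = 0)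
    (h2 : r * s - 4 * r - 2 * s - 2 * p - 2 * q - 2 = 0)
    (h3 : r * p - 2 * r - s - p - q - 1 = 0)
    (h4 : r * q - r - s - p - q - 1 = 0) :
    r = 12 ∧ s = 6 ∧ p = 3 ∧ q = 2 :=
  stmt_4_general r s p q hr h1 h2 h3 h4
end

section
/- Let f : ℝ → ℝ be three times continuously differentiable near a simple zero α (f(α)=0, f'(α)≠0), β ≠ 0, and define w(x) = x - β f(x) and y(x) = x - β f(x)² / (f(x) - f(w(x))) for x near α, x ≠ α. Then y(x) - α = (1 - β f'(α)) c₂ (x - α)² + O((x - α)³) as x → α, where c₂ = f''(α)/(2 f'(α)). In particular the Steffensen-like step converges with order at least 2, and if β = 1/f'(α) the quadratic error coefficient vanishes. -/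
/-!
Since `x - w(x) = β f(x)`, the step is `y = x - f(x) / f[w, x]`: a Newton step in which
`f'(x)` is replaced by the divided difference `f[w, x]`. With `e = x - α`,
`a = f'(α)` and `b = f''(α) / 2`, second-order Taylor expansion gives
`f[w, x] = a + b (e + (w - α)) + O(e²)` and `w - α = (1 - β a) e + O(e²)`, so the slope is
`a + d e + O(e²)` with `d = b (2 - β a)`. A Newton-type step whose slope is `a + d e + O(e²)`
has error `((d - b) / a) e² + O(e³)`, and `(d - b) / a = (1 - β a) c₂`.
-/

open Asymptotics Filter Set Topology

theorem ContDiffAt.isBigO_sub_taylorWithinEval {E : Type*} [NormedAddCommGroup E]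
    [NormedSpace ℝ E] {f : ℝ → E} {x₀ : ℝ} {n : ℕ} (hf : ContDiffAt ℝ (n + 1) f x₀) :
    (fun x => f x - taylorWithinEval f n univ x₀ x) =O[𝓝 x₀]
      fun x => (x - x₀) ^ (n + 1) := by
  obtain ⟨u, hu, hfu⟩ := hf.contDiffOn le_rfl (by simp)
  obtain ⟨r, hr, hball⟩ := Metric.mem_nhds_iff.1 hu
  have htaylor : ∀ k x, taylorWithinEval f k (Metric.ball x₀ r) x₀ x =
      taylorWithinEval f k univ x₀ x := by
    intro k x
    simp only [taylor_within_apply, iteratedDerivWithin_univ,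
      iteratedDerivWithin_of_isOpen Metric.isOpen_ball (Metric.mem_ball_self hr)]
  have ho := taylor_isLittleO (convex_ball x₀ r) (Metric.mem_ball_self hr)
    (n := n + 1) (by exact_mod_cast hfu.mono hball)
  rw [nhdsWithin_eq_nhds.2 (Metric.ball_mem_nhds x₀ hr)] at ho
  simp only [htaylor, taylorWithinEval_succ] at ho
  have hterm : (fun x => (((n + 1 : ℝ) * (n.factorial : ℝ))⁻¹ * (x - x₀) ^ (n + 1)) •
      iteratedDerivWithin (n + 1) f univ x₀) =O[𝓝 x₀] fun x => (x - x₀) ^ (n + 1) :=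
    (((isBigO_refl _ _).const_mul_left _).smul (isBigO_const_one ℝ _ _)).congr_right
      fun x => by simp
  refine (ho.isBigO.add hterm).congr_left fun x => ?_
  abel

variable {ι : Type*} {l : Filter ι}

theorem isBigO_quasiNewton_error {e F q : ι → ℝ} {a b d : ℝ} (ha : a ≠ 0)
    (he : Tendsto e l (𝓝 0))
    (hF : (fun i => F i - (a * e i + b * e i ^ 2)) =O[l] fun i => e i ^ 3)
    (hq : (fun i => q i - (a + d * e i)) =O[l] fun i => e i ^ 2) :
    (fun i => e i - F i / q i - (d - b) / a * e i ^ 2) =O[l] fun i => e i ^ 3 := by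
  set C := (d - b) / a
  have hC : C * a = d - b := div_mul_cancel₀ _ ha
  have hq_lim : Tendsto q l (𝓝 a) := by
    have h1 : Tendsto (fun i => q i - (a + d * e i)) l (𝓝 0) :=
      hq.trans_tendsto (by simpa using he.pow 2)
    have h2 : Tendsto (fun i => a + d * e i) l (𝓝 a) := by
      simpa using (he.const_mul d).const_add a
    simpa using h1.add h2
  have he_one : e =O[l] fun _ => (1 : ℝ) := he.isBigO_one ℝ
  have hfactor : (fun i => e i - C * e i ^ 2) =O[l] e :=
    (isBigO_refl e l).sub (((isBigO_refl e l).mul he_one).const_mul_left C |>.congr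
      (fun i => by ring) (fun i => by ring))
  have hprod : (fun i => (e i - C * e i ^ 2) * (q i - (a + d * e i))) =O[l]
      fun i => e i ^ 3 :=
    (hfactor.mul hq).congr_right fun i => by ring
  have hnum : (fun i => (e i - C * e i ^ 2) * q i - F i) =O[l] fun i => e i ^ 3 :=
    ((hprod.sub hF).sub ((isBigO_refl (fun i => e i ^ 3) l).const_mul_left (C * d))).congr_left
      fun i => by linear_combination (e i) ^ 2 * hC
  have hinv : (fun i => (q i)⁻¹) =O[l] fun _ => (1 : ℝ) := (hq_lim.inv₀ ha).isBigO_one ℝ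
  refine (hnum.mul hinv).congr' ?_ (Eventually.of_forall fun i => mul_one _)
  filter_upwards [hq_lim.eventually_ne ha] with i hi
  field_simp
  ring

theorem isBigO_slope_sub_of_taylor {f : ℝ → ℝ} {α a b : ℝ} {u v : ι → ℝ}
    (hf : (fun x => f x - (f α + a * (x - α) + b * (x - α) ^ 2)) =O[𝓝 α]
      fun x => (x - α) ^ 3)
    (hu : Tendsto u l (𝓝[≠] α)) (hv : (fun i => v i - α) =O[l] fun i => u i - α)
    (huv : (fun i => u i - α) =O[l] fun i => u i - v i) :
    (fun i => slope f (v i) (u i) - (a + b * ((u i - α) + (v i - α)))) =O[l]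
      fun i => (u i - α) ^ 2 := by
  set R := fun x => f x - (f α + a * (x - α) + b * (x - α) ^ 2)
  obtain ⟨hu, hne⟩ := tendsto_nhdsWithin_iff.1 hu
  have hu0 : Tendsto (fun i => u i - α) l (𝓝 0) := tendsto_sub_nhds_zero_iff.2 hu
  have hv' : Tendsto v l (𝓝 α) := tendsto_sub_nhds_zero_iff.1 (hv.trans_tendsto hu0)
  have hRu : (fun i => R (u i)) =O[l] fun i => (u i - α) ^ 3 := hf.comp_tendsto hu
  have hRv : (fun i => R (v i)) =O[l] fun i => (u i - α) ^ 3 :=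
    (hf.comp_tendsto hv').trans (hv.pow 3)
  have hinv : (fun i => (u i - v i)⁻¹) =O[l] fun i => (u i - α)⁻¹ :=
    huv.inv_rev (hne.mono fun i hi h => absurd (sub_eq_zero.1 h) hi)
  -- `f u - f v = (u - v) (a + b ((u - α) + (v - α))) + R u - R v`
  refine ((hRu.sub hRv).mul hinv).congr' ?_ (Eventually.of_forall fun i => ?_)
  · filter_upwards [hne, huv.eq_zero_imp] with i hi hi'
    have : u i - v i ≠ 0 := fun h => hi (sub_eq_zero.1 (hi' h))
    rw [slope_def_field]
    field_simp
    ring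
  · rcases eq_or_ne (u i - α) 0 with h | h
    · simp [h]
    · field_simp

theorem isBigO_steffensen_slope_sub {f : ℝ → ℝ} {α a b β : ℝ} (ha : a ≠ 0) (hβ : β ≠ 0)
    (hfα : f α = 0)
    (hT : (fun x => f x - (f α + a * (x - α) + b * (x - α) ^ 2)) =O[𝓝 α]
      fun x => (x - α) ^ 3) :
    (fun x => slope f (x - β * f x) x - (a + b * (2 - β * a) * (x - α))) =O[𝓝[≠] α]
      fun x => (x - α) ^ 2 := by
  have hcube : (fun x => (x - α) ^ 3) =O[𝓝 α] fun x => (x - α) ^ 2 := by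
    simpa only [← norm_pow, isBigO_norm_left, isBigO_norm_right] using
      (isLittleO_pow_sub_pow_sub α (by norm_num : 2 < 3)).isBigO
  have hsq : (fun x => (x - α) ^ 2) =o[𝓝 α] fun x => x - α := by
    simpa only [← norm_pow, isLittleO_norm_left] using isLittleO_pow_sub_sub α one_lt_two
  have hlin : (fun x => f x - a * (x - α)) =O[𝓝 α] fun x => (x - α) ^ 2 :=
    ((hT.trans hcube).add ((isBigO_refl _ _).const_mul_left b)).congr_left
      fun x => by rw [hfα]; ring
  have hΘ : (fun x => a * (x - α)) =Θ[𝓝 α] f := by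
    have ho : (fun x => f x - a * (x - α)) =o[𝓝 α] fun x => a * (x - α) :=
      (hlin.trans_isLittleO hsq).trans_isBigO (isBigO_self_const_mul ha _ _)
    exact ho.right_isTheta_add.trans_eventuallyEq (Eventually.of_forall fun x => by simp)
  have hw : (fun x => x - β * f x - α) =O[𝓝 α] fun x => x - α :=
    ((isBigO_refl _ _).sub
      ((hΘ.symm.isBigO.trans (isBigO_const_mul_self a _ _)).const_mul_left β)).congr_left
        fun x => by ring
  have hxw : (fun x => x - α) =O[𝓝 α] fun x => x - (x - β * f x) :=
    (((isBigO_self_const_mul ha _ _).trans hΘ.isBigO).trans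
      (isBigO_self_const_mul hβ _ _)).congr_right fun x => by ring
  refine ((isBigO_slope_sub_of_taylor hT tendsto_id (hw.mono nhdsWithin_le_nhds)
    (hxw.mono nhdsWithin_le_nhds)).sub ((hlin.mono nhdsWithin_le_nhds).const_mul_left
      (b * β))).congr_left fun x => ?_
  simp only [id]
  ring

theorem stmt_11 (f : ℝ → ℝ) (α β c₂ : ℝ) (hβ : β ≠ 0)
    (hf : ContDiffAt ℝ 3 f α) (hfα : f α = 0) (hf' : deriv f α ≠ 0)
    (hc₂ : c₂ = iteratedDeriv 2 f α / (2 * deriv f α))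
    (w y : ℝ → ℝ)
    (hw : ∀ x : ℝ, w x = x - β * f x)
    (hy : ∀ x : ℝ, y x = x - β * (f x) ^ 2 / (f x - f (w x))) :
    ((fun x : ℝ => y x - α - (1 - β * deriv f α) * c₂ * (x - α) ^ 2) =O[nhds α]
      fun x : ℝ => (x - α) ^ 3) ∧
    (β = 1 / deriv f α → (1 - β * deriv f α) * c₂ = 0) := by
  obtain rfl : w = fun x => x - β * f x := funext hw
  set a := deriv f α
  set b := iteratedDeriv 2 f α / 2
  refine ⟨?_, fun h => by rw [h, one_div, inv_mul_cancel₀ hf', sub_self, zero_mul]⟩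
  have hT : (fun x => f x - (f α + a * (x - α) + b * (x - α) ^ 2)) =O[𝓝 α]
      fun x => (x - α) ^ 3 :=
    (ContDiffAt.isBigO_sub_taylorWithinEval (n := 2) hf).congr_left fun x => by
      simp [taylor_within_apply, iteratedDerivWithin_univ, a, b]
      ring
  have hN := isBigO_quasiNewton_error (e := fun x => x - α) (F := f) (b := b) hf'
    (tendsto_sub_nhds_zero_iff.2 (tendsto_id.mono_left nhdsWithin_le_nhds))
    ((hT.mono nhdsWithin_le_nhds).congr_left fun x => by rw [hfα]; ring)
    (isBigO_steffensen_slope_sub hf' hβ hfα hT)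
  -- `slope f α α = 0` is a junk value, so the estimate is proved on `𝓝[≠] α`;
  -- at `α` itself both sides vanish.
  rw [← nhdsNE_sup_pure α]
  refine (hN.congr_left fun x => ?_).sup (isBigO_pure.2 fun _ => by simp [hy, hfα])
  rw [hy, slope_def_field, sub_sub_cancel, hc₂]
  field_simp
  ring
end
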